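/- arXiv:1609.03844 — 2 statements merged into one kernel-verified Lean document; each statement's English description precedes it below -/
import Mathlib

section
/- Let f : C' → C be a surjective function such that every fiber of f has exactly d elements (a d-to-1 cover). Then the induced map Sym^m f : Sym^m C' → Sym^m C applying f elementwise to multisets is surjective, and the fiber of Sym^m f over any multiset of m distinct points of C has exactly d^m elements. -/
/-!
Over a multiset of distinct points a lift to `C'` is determined by an independent choice of a
point in each fibre, so the fibre of `Multiset.map f` over `a ::ₘ s` with `a ∉ s` is the
product of the fibre of `f` over `a` with the fibre over `s`; induction gives `d ^ m`. Since
`map` preserves cardinality, the fibres of `Sym.map f` are those of `Multiset.map f`.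
-/

namespace Multiset

variable {α β : Type*} {f : α → β}

theorem bijective_cons_fiber_map {a : β} {s : Multiset β} (ha : a ∉ s) :
    Function.Bijective
      (fun p : {x : α // f x = a} × {t : Multiset α // t.map f = s} =>
        (⟨p.1.1 ::ₘ p.2.1, by rw [map_cons, p.1.2, p.2.2]⟩ :
          {t : Multiset α // t.map f = a ::ₘ s})) := by
  classical
  constructor
  · rintro ⟨⟨x, hx⟩, ⟨t, ht⟩⟩ ⟨⟨x', hx'⟩, ⟨t', ht'⟩⟩ h
    rcases cons_eq_cons.1 (Subtype.mk.inj h) with ⟨rfl, rfl⟩ | ⟨-, cs, rfl, -⟩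
    · rfl
    · have : f x' ∈ s := ht ▸ mem_map_of_mem f (mem_cons_self x' cs)
      exact absurd (hx' ▸ this) ha
  · rintro ⟨u, hu⟩
    obtain ⟨x, hxu, hx, herase⟩ := (map_eq_cons f u s a).2 hu
    exact ⟨⟨⟨x, hx⟩, ⟨u.erase x, herase⟩⟩, Subtype.ext (cons_erase hxu)⟩

theorem card_fiber_map_of_nodup {s : Multiset β} (hs : s.Nodup) :
    Nat.card {t : Multiset α // t.map f = s} = (s.map fun c => Nat.card {x // f x = c}).prod := by
  induction s using Multiset.induction with
  | empty =>
    have : Unique {t : Multiset α // t.map f = 0} :=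
      ⟨⟨⟨0, map_zero f⟩⟩, fun ⟨t, ht⟩ => Subtype.ext (map_eq_zero.1 ht)⟩
    simp
  | cons a s ih =>
    obtain ⟨ha, hs⟩ := nodup_cons.1 hs
    rw [← Nat.card_eq_of_bijective _ (bijective_cons_fiber_map ha), Nat.card_prod, ih hs,
      map_cons, prod_cons]

end Multiset

namespace Sym

variable {α β : Type*} {n : ℕ}

theorem map_surjective {f : α → β} (hf : Function.Surjective f) :
    Function.Surjective (map f : Sym α n → Sym β n) := fun s =>
  ⟨s.map (Function.surjInv hf), by
    rw [map_map, (Function.rightInverse_surjInv hf).comp_eq_id, map_id]⟩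

def fiberMapEquiv (f : α → β) (s : Sym β n) :
    {t : Sym α n // t.map f = s} ≃ {t : Multiset α // t.map f = s} where
  toFun t := ⟨t.1, by rw [← coe_map, t.2]⟩
  invFun u :=
    ⟨⟨u.1, by rw [← Multiset.card_map f, u.2]; exact s.2⟩, coe_injective (by simpa using u.2)⟩
  left_inv _ := rfl
  right_inv _ := rfl

end Sym

theorem stmt4 {C C' : Type*} (f : C' → C) (d m : ℕ)
    (hsurj : Function.Surjective f)
    (hfib : ∀ c : C, Nat.card {x : C' // f x = c} = d) :
    Function.Surjective (Sym.map f : Sym C' m → Sym C m) ∧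
      ∀ s : Sym C m, (s : Multiset C).Nodup →
        Nat.card {t : Sym C' m // Sym.map f t = s} = d ^ m := by
  refine ⟨Sym.map_surjective hsurj, fun s hs => ?_⟩
  rw [Nat.card_congr (Sym.fiberMapEquiv f s), Multiset.card_fiber_map_of_nodup hs]
  simp [hfib, Multiset.map_const', Multiset.prod_replicate]
end

section
/- Let f : C' → C be a d-to-1 surjection of types equipped with a free action of the cyclic group Z/dZ on C' whose orbits are the fibers of f, and let (Z/dZ)^m act on Sym^m C' by acting coordinatewise on the elements of a multiset (up to permutation of coordinates). Then two multisets a, b ∈ Sym^m C' lie in the same (Z/dZ)^m-orbit if and only if Sym^m f(a) = Sym^m f(b); moreover Sym^m f factors through the quotient, inducing a bijection between the set of (Z/dZ)^m-orbits of Sym^m C' and Sym^m C. -/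
/-- The quotient map `πₖ : X^k → Sym^k X`. -/
def symQuot {X : Type*} {k : ℕ} (g : Fin k → X) : Sym X k :=
  ⟨(List.ofFn g : List X), by simp⟩

lemma rel_exists_lists {α β : Type*} {r : α → β → Prop} {s : Multiset α} {t : Multiset β}
    (h : Multiset.Rel r s t) :
    ∃ (l₁ : List α) (l₂ : List β), List.Forall₂ r l₁ l₂ ∧ s = ↑l₁ ∧ t = ↑l₂ := by
  induction h with
  | zero => exact ⟨[], [], List.Forall₂.nil, rfl, rfl⟩
  | @cons a b s t hab _ ih =>
    obtain ⟨l₁, l₂, hf, hs, ht⟩ := ih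
    exact ⟨a :: l₁, b :: l₂, List.Forall₂.cons hab hf, by simp [hs], by simp [ht]⟩

theorem stmt13 {C C' : Type*} (f : C' → C) (d : ℕ) [NeZero d]
    [MulAction (Multiplicative (ZMod d)) C']
    (hsurj : Function.Surjective f)
    (hfib : ∀ c : C, Nat.card {x : C' // f x = c} = d)
    (hfree : ∀ (g : Multiplicative (ZMod d)) (x : C'), g • x = x → g = 1)
    (hGf : ∀ (g : Multiplicative (ZMod d)) (x : C'), f (g • x) = f x)
    (horb : ∀ x y : C', f x = f y → ∃ g : Multiplicative (ZMod d), y = g • x)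
    (m : ℕ) :
    (∀ a b : Sym C' m,
      Sym.map f a = Sym.map f b ↔
        ∃ (xs ys : Fin m → C') (g : Fin m → Multiplicative (ZMod d)),
          symQuot xs = a ∧ symQuot ys = b ∧ ∀ j : Fin m, ys j = g j • xs j) ∧
    Function.Surjective (Sym.map f : Sym C' m → Sym C m) := by
  classical
  constructor
  · intro a b
    constructor
    · intro h
      obtain ⟨s, hs⟩ := a
      obtain ⟨t, ht⟩ := b
      have hmap : Multiset.map f s = Multiset.map f t := by
        have := congrArg Subtype.val h
        simpa [Sym.map] using this
      have hrel : Multiset.Rel (fun x y => f x = f y) s t := by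
        rw [← Multiset.rel_eq] at hmap
        exact Multiset.rel_map.mp hmap
      obtain ⟨l₁, l₂, hf, hs', ht'⟩ := rel_exists_lists hrel
      have hl₁ : l₁.length = m := by
        have := hs; rw [hs'] at this; simpa using this
      have hl₂ : l₂.length = m := by
        have := ht; rw [ht'] at this; simpa using this
      set xs : Fin m → C' := fun j => l₁.get (Fin.cast hl₁.symm j) with hxs
      set ys : Fin m → C' := fun j => l₂.get (Fin.cast hl₂.symm j) with hys
      have hfxy : ∀ j : Fin m, f (xs j) = f (ys j) := by
        intro j
        have := List.forall₂_iff_get.mp hf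
        exact this.2 j (by simp [hl₁]) (by simp [hl₂])
      choose g hg using fun j => horb (xs j) (ys j) (hfxy j)
      refine ⟨xs, ys, g, ?_, ?_, hg⟩
      · apply Subtype.ext
        show ((List.ofFn xs : List C') : Multiset C') = s
        rw [hs']
        congr 1
        have : List.ofFn xs = List.ofFn (fun i : Fin l₁.length => l₁.get i) := by
          subst hl₁; rfl
        rw [this, List.ofFn_get]
      · apply Subtype.ext
        show ((List.ofFn ys : List C') : Multiset C') = t
        rw [ht']
        congr 1
        have : List.ofFn ys = List.ofFn (fun i : Fin l₂.length => l₂.get i) := by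
          subst hl₂; rfl
        rw [this, List.ofFn_get]
    · rintro ⟨xs, ys, g, rfl, rfl, hgy⟩
      apply Subtype.ext
      simp only [Sym.map, symQuot, Multiset.map_coe, List.map_ofFn]
      have hcomp : f ∘ xs = f ∘ ys := funext fun j => by
        simp only [Function.comp_apply, hgy j, hGf]
      rw [hcomp]
  · intro c
    refine ⟨Sym.map (Function.surjInv hsurj) c, ?_⟩
    rw [Sym.map_map]
    have : f ∘ Function.surjInv hsurj = id := funext fun x => Function.surjInv_eq hsurj x
    rw [this, Sym.map_id]
end
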